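/- arXiv:2412.14068 — 6 statements merged into one kernel-verified Lean document; each statement's English description precedes it below -/
import Mathlib

section
/- Let S be a semigroupoid and (α,X) a partial action of S on a set X satisfying condition (G1). If S^s ≠ ∅ for every s ∈ S, then (α,X) satisfies condition (G2), and therefore (α,X) is a global action of S. -/
universe u v w

/-- An (Exel) semigroupoid: a set `S` with a set of composable pairs (encoded by
the relation `comp`) and a multiplication, associative in Exel's sense. -/
structure Semigroupoid (S : Type u) where
  comp : S → S → Prop
  mul : S → S → S
  assoc : ∀ s t r : S,
    ((comp s t ∧ comp t r) ∨ (comp s t ∧ comp (mul s t) r) ∨ (comp t r ∧ comp s (mul t r))) →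
      comp s t ∧ comp t r ∧ comp (mul s t) r ∧ comp s (mul t r) ∧
        mul (mul s t) r = mul s (mul t r)

namespace Semigroupoid

variable {S : Type u} {X : Type v}

/-- `S^s = {t | (s,t) ∈ S⁽²⁾}`. -/
def rightComp (G : Semigroupoid S) (s : S) : Set S := {t | G.comp s t}

/-- `X_s = α_s(ₛX)`. -/
def img (dom : S → Set X) (act : S → X → X) (s : S) : Set X := act s '' dom s

/-- Condition (P1): `α_t⁻¹(ₛX ∩ X_t) = ₜX ∩ ₛₜX` for composable `(s,t)`. -/
def P1 (G : Semigroupoid S) (dom : S → Set X) (act : S → X → X) : Prop :=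
  ∀ s t : S, G.comp s t →
    {x | x ∈ dom t ∧ act t x ∈ dom s ∩ img dom act t} = dom t ∩ dom (G.mul s t)

/-- Condition (P2): `α_s ∘ α_t = α_{st}` on `ₜX ∩ ₛₜX` for composable `(s,t)`. -/
def P2 (G : Semigroupoid S) (dom : S → Set X) (act : S → X → X) : Prop :=
  ∀ s t : S, G.comp s t → ∀ x ∈ dom t ∩ dom (G.mul s t),
    act s (act t x) = act (G.mul s t) x

/-- A partial action of the semigroupoid on `X`. -/
def IsPartialAction (G : Semigroupoid S) (dom : S → Set X) (act : S → X → X) : Prop :=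
  P1 G dom act ∧ P2 G dom act

/-- Condition (G1): if `S^s = S^t ≠ ∅` then `ₛX = ₜX`. -/
def G1 (G : Semigroupoid S) (dom : S → Set X) : Prop :=
  ∀ s t : S, G.rightComp s = G.rightComp t → (G.rightComp s).Nonempty → dom s = dom t

/-- Condition (G2): if `(s,t) ∈ S⁽²⁾` then `ₜX = ₛₜX`. -/
def G2 (G : Semigroupoid S) (dom : S → Set X) : Prop :=
  ∀ s t : S, G.comp s t → dom t = dom (G.mul s t)

/-- A global action of the semigroupoid on `X`. -/
def IsGlobalAction (G : Semigroupoid S) (dom : S → Set X) (act : S → X → X) : Prop :=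
  IsPartialAction G dom act ∧ G1 G dom ∧ G2 G dom

/-- A partial action is non-degenerate when `X = ⋃ₛ (ₛX ∪ X_s)`. -/
def Nondegenerate (G : Semigroupoid S) (dom : S → Set X) (act : S → X → X) : Prop :=
  (⋃ s : S, dom s ∪ img dom act s) = Set.univ

section Morphisms

variable {Y : Type w}

/-- A morphism of partial actions `φ : (α,X) → (β,Y)`. -/
def IsMorphism (G : Semigroupoid S) (domX : S → Set X) (actX : S → X → X)
    (domY : S → Set Y) (actY : S → Y → Y) (φ : X → Y) : Prop :=
  ∀ s : S, (∀ x ∈ domX s, φ x ∈ domY s) ∧ (∀ x ∈ domX s, φ (actX s x) = actY s (φ x))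

/-- An embedding of partial actions. -/
def IsEmbedding (G : Semigroupoid S) (domX : S → Set X) (actX : S → X → X)
    (domY : S → Set Y) (actY : S → Y → Y) (φ : X → Y) : Prop :=
  Function.Injective φ ∧ IsMorphism G domX actX domY actY φ ∧
    ∀ s : S, domX s = {x | φ x ∈ domY s ∧ actY s (φ x) ∈ Set.range φ}

end Morphisms

/-- The relation `∼` on `S`: `s ∼ t` iff `s = t`, or `S^s = S^t ≠ ∅`, or `s = ut`. -/
def simRel (G : Semigroupoid S) (s t : S) : Prop :=
  s = t ∨ (G.rightComp s = G.rightComp t ∧ (G.rightComp s).Nonempty) ∨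
    ∃ u : S, G.comp u t ∧ s = G.mul u t

/-- `R`: the smallest equivalence relation containing `∼`. -/
def Rrel (G : Semigroupoid S) : S → S → Prop := Relation.EqvGen (simRel G)

/-- `₍ρₛ₎X = ⋃ ({ₜX : t R s} ∪ {X_t : t ∈ S^s})`. -/
def rhoDom (G : Semigroupoid S) (dom : S → Set X) (act : S → X → X) (s : S) : Set X :=
  {x | (∃ t : S, Rrel G t s ∧ x ∈ dom t) ∨ (∃ t : S, G.comp s t ∧ x ∈ img dom act t)}

/-- The set `D ⊆ S^δ × X`, where `S^δ = S ∪ {δ}` is encoded as `Option S`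
(with `none` playing the role of the extra symbol `δ`). -/
def DSet (G : Semigroupoid S) (dom : S → Set X) (act : S → X → X) : Set (Option S × X) :=
  {p | ∀ s : S, p.1 = some s → p.2 ∈ rhoDom G dom act s}

theorem noneMem (G : Semigroupoid S) (dom : S → Set X) (act : S → X → X) (x : X) :
    ((none : Option S), x) ∈ DSet G dom act := by
  intro s h
  simp at h

/-- Generating relation for `≈`:
(1) `(δ, α_s x) ∼ (s, x)` for `x ∈ ₛX`;
(2) `(tu, x) ∼ (t, α_u x)` for `u ∈ S^t` and `x ∈ ᵤX`. -/
def preRel (G : Semigroupoid S) (dom : S → Set X) (act : S → X → X) :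
    Option S × X → Option S × X → Prop := fun p q =>
  (∃ (s : S) (x : X), x ∈ dom s ∧ p = (none, act s x) ∧ q = (some s, x)) ∨
  (∃ (t u : S) (x : X), G.comp t u ∧ x ∈ dom u ∧
      p = (some (G.mul t u), x) ∧ q = (some t, act u x))

/-- `≈`: the smallest equivalence relation containing the generating relation. -/
def approx (G : Semigroupoid S) (dom : S → Set X) (act : S → X → X) :
    Option S × X → Option S × X → Prop :=
  Relation.EqvGen (preRel G dom act)

/-- The setoid on `D` induced by `≈`. -/
def DSetoid (G : Semigroupoid S) (dom : S → Set X) (act : S → X → X) :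
    Setoid (DSet G dom act) :=
  Setoid.comap Subtype.val (Relation.EqvGen.setoid (preRel G dom act))

/-- `E = D/≈`. -/
def EType (G : Semigroupoid S) (dom : S → Set X) (act : S → X → X) : Type _ :=
  Quotient (DSetoid G dom act)

/-- The class `[a,x] ∈ E` of `(a,x) ∈ D`. -/
def mkE (G : Semigroupoid S) (dom : S → Set X) (act : S → X → X)
    (p : DSet G dom act) : EType G dom act :=
  Quotient.mk (DSetoid G dom act) p

/-- `ₛE = {[a,x] : (a,x) ≈ (t,y) for some t ∈ S^s} ∪ {[δ,x] : x ∈ ₍ρₛ₎X}`. -/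
def domE (G : Semigroupoid S) (dom : S → Set X) (act : S → X → X) (s : S) :
    Set (EType G dom act) :=
  {e | (∃ (p : DSet G dom act) (t : S) (y : X),
          G.comp s t ∧ approx G dom act p.val (some t, y) ∧ e = mkE G dom act p) ∨
       (∃ x : X, x ∈ rhoDom G dom act s ∧
          e = mkE G dom act ⟨(none, x), noneMem G dom act x⟩)}

/-- `δ : X → E`, `x ↦ [δ,x]`. -/
def deltaMap (G : Semigroupoid S) (dom : S → Set X) (act : S → X → X) (x : X) :
    EType G dom act :=
  mkE G dom act ⟨(none, x), noneMem G dom act x⟩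

end Semigroupoid

namespace Semigroupoid

variable {S : Type u} {X : Type v}

theorem rightComp_mul_eq (G : Semigroupoid S) {s t : S} (hst : G.comp s t) :
    G.rightComp (G.mul s t) = G.rightComp t := by
  ext r
  exact ⟨fun hstr => (G.assoc s t r (.inr (.inl ⟨hst, hstr⟩))).2.1,
    fun htr => (G.assoc s t r (.inl ⟨hst, htr⟩)).2.2.1⟩

theorem g2_of_g1 {G : Semigroupoid S} {dom : S → Set X} (hG1 : G1 G dom)
    (h : ∀ s : S, (G.rightComp s).Nonempty) : G2 G dom :=
  fun s t hst => hG1 t (G.mul s t) (G.rightComp_mul_eq hst).symm (h t)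

end Semigroupoid

open Semigroupoid in
/-- If a partial action satisfies (G1) and `S^s ≠ ∅` for every `s`, then it satisfies (G2),
and is therefore a global action. -/
theorem statement1 {S : Type u} {X : Type v} (G : Semigroupoid S)
    (dom : S → Set X) (act : S → X → X)
    (hα : IsPartialAction G dom act) (hG1 : G1 G dom)
    (h : ∀ s : S, (G.rightComp s).Nonempty) :
    G2 G dom ∧ IsGlobalAction G dom act := by
  have hG2 : G2 G dom := g2_of_g1 hG1 h
  exact ⟨hG2, hα, hG1, hG2⟩
end

section
/- Let S be a semigroupoid and let R be the smallest equivalence relation on S containing the relation ∼ defined by: s ∼ t iff s = t, or S^s = S^t ≠ ∅, or s = ut for some u with (u,t) ∈ S⁽²⁾. Then s R t implies S^s = S^t. -/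
universe u v w

namespace Semigroupoid

variable {S : Type u} {X : Type v}

variable (G : Semigroupoid S)

theorem comp_mul_iff {u t : S} (hut : G.comp u t) (r : S) :
    G.comp (G.mul u t) r ↔ G.comp t r :=
  ⟨fun h => (G.assoc u t r (.inr (.inl ⟨hut, h⟩))).2.1,
    fun h => (G.assoc u t r (.inl ⟨hut, h⟩)).2.2.1⟩

theorem rightComp_mul {u t : S} (hut : G.comp u t) :
    G.rightComp (G.mul u t) = G.rightComp t :=
  Set.ext (G.comp_mul_iff hut)

theorem rightComp_eq_of_simRel {s t : S} (h : simRel G s t) : G.rightComp s = G.rightComp t := by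
  rcases h with rfl | ⟨heq, -⟩ | ⟨u, hut, rfl⟩
  · rfl
  · exact heq
  · exact G.rightComp_mul hut

end Semigroupoid

open Semigroupoid in
/-- `s R t` implies `S^s = S^t`. -/
theorem statement8 {S : Type u} (G : Semigroupoid S) (s t : S) (h : Rrel G s t) :
    G.rightComp s = G.rightComp t :=
  Setoid.eqvGen_le (s := Setoid.ker G.rightComp) (fun _ _ => G.rightComp_eq_of_simRel) h
end

section
/- Let S be a semigroupoid, (α,X) a partial action of S, and ≈ the equivalence relation on the set D from the universal globalization construction. If s,t ∈ S and (s,x) ≈ (t,y), then x ∈ ₛX if and only if y ∈ ₜX, and in that case α_s(x) = α_t(y). -/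
universe u v w

/-!
Attach to each `(a, x)` the value `α_a(x)` when `x ∈ ₐX`, "undefined" (`none`) otherwise, and `x`
itself for `a = δ`. Condition (1) of `≈` holds by definition of this value, and (P1) and (P2)
say exactly that it is unchanged along condition (2); so it is constant on `≈`-classes.
-/

namespace Semigroupoid

variable {S : Type u} {X : Type v}

noncomputable def partialEval (dom : S → Set X) (act : S → X → X) : Option S × X → Option X
  | (none, x) => some x
  | (some s, x) => open Classical in if x ∈ dom s then some (act s x) else none

lemma mem_dom_mul_iff {G : Semigroupoid S} {dom : S → Set X} {act : S → X → X}
    (hP1 : P1 G dom act) {t u : S} (htu : G.comp t u) {x : X} (hx : x ∈ dom u) :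
    x ∈ dom (G.mul t u) ↔ act u x ∈ dom t := by
  have := Set.ext_iff.mp (hP1 t u htu) x
  simp only [Set.mem_ofPred_eq, Set.mem_inter_iff] at this
  exact ⟨fun h => (this.mpr ⟨hx, h⟩).2.1, fun h => (this.mp ⟨hx, h, x, hx, rfl⟩).2⟩

lemma partialEval_eq_of_preRel {G : Semigroupoid S} {dom : S → Set X} {act : S → X → X}
    (hα : IsPartialAction G dom act) {p q : Option S × X} (hpq : preRel G dom act p q) :
    partialEval dom act p = partialEval dom act q := by
  classical
  rcases hpq with ⟨s, x, hx, rfl, rfl⟩ | ⟨t, u, x, htu, hx, rfl, rfl⟩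
  · simp [partialEval, hx]
  · by_cases hm : x ∈ dom (G.mul t u)
    · have hd : act u x ∈ dom t := (mem_dom_mul_iff hα.1 htu hx).mp hm
      simp [partialEval, hm, hd, hα.2 t u htu x ⟨hx, hm⟩]
    · have hd : act u x ∉ dom t := mt (mem_dom_mul_iff hα.1 htu hx).mpr hm
      simp [partialEval, hm, hd]

lemma partialEval_eq_of_approx {G : Semigroupoid S} {dom : S → Set X} {act : S → X → X}
    (hα : IsPartialAction G dom act) {p q : Option S × X} (hpq : approx G dom act p q) :
    partialEval dom act p = partialEval dom act q :=
  Setoid.eqvGen_le (s := Setoid.ker (partialEval dom act))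
    (fun _ _ h => partialEval_eq_of_preRel hα h) hpq

end Semigroupoid

open Semigroupoid in
theorem statement11_general {S : Type u} {X : Type v} (G : Semigroupoid S)
    (dom : S → Set X) (act : S → X → X) (hα : IsPartialAction G dom act)
    (s t : S) (x y : X)
    (h : approx G dom act (some s, x) (some t, y)) :
    (x ∈ dom s ↔ y ∈ dom t) ∧ (x ∈ dom s → act s x = act t y) := by
  classical
  have key := partialEval_eq_of_approx hα h
  simp only [partialEval] at key
  split_ifs at key with hx hy hy
  · exact ⟨iff_of_true hx hy, fun _ => Option.some_injective _ key⟩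
  · exact ⟨iff_of_false hx hy, fun h => absurd h hx⟩

open Semigroupoid in
/-- If `(s,x) ≈ (t,y)` (with `s,t ∈ S`), then `x ∈ ₛX ↔ y ∈ ₜX`, and in that case
`α_s(x) = α_t(y)`. -/
theorem statement11 {S : Type u} {X : Type v} (G : Semigroupoid S)
    (dom : S → Set X) (act : S → X → X) (hα : IsPartialAction G dom act)
    (s t : S) (x y : X)
    (hDs : ((some s : Option S), x) ∈ DSet G dom act)
    (hDt : ((some t : Option S), y) ∈ DSet G dom act)
    (h : approx G dom act (some s, x) (some t, y)) :
    (x ∈ dom s ↔ y ∈ dom t) ∧ (x ∈ dom s → act s x = act t y) :=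
  statement11_general G dom act hα s t x y h
end

section
/- Let S be a semigroupoid, (α,X) a partial action of S, and ≈ the equivalence relation on the set D from the universal globalization construction. If t,p ∈ S with (δ,x) ≈ (t,y) and (p,t) ∈ S⁽²⁾, then (p,x) ≈ (pt,y). -/
universe u v w

/-
A pair `(s, x)` with `x ∈ ₛX` denotes the point `α_s x`, and `(δ, x)` denotes `x`; read this way
every element of `D` has at most one value in `X`. Conditions (P1) and (P2) say exactly that the two
sides of each generating relation of `≈` have the same (possibly undefined) value, so `≈` preserves
it. Hence `(δ, x) ≈ (t, y)` forces `y ∈ ₜX` and `α_t y = x`, and then `(pt, y) ≈ (p, α_t y)` is a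
generating relation.
-/

namespace Semigroupoid

variable {S : Type u} {X : Type v} {G : Semigroupoid S} {dom : S → Set X} {act : S → X → X}

def partialValue (dom : S → Set X) (act : S → X → X) : Option S × X → Part X
  | (none, x) => Part.some x
  | (some s, x) => ⟨x ∈ dom s, fun _ => act s x⟩

theorem partialValue_some_eq_some_iff {s : S} {x z : X} :
    partialValue dom act (some s, x) = Part.some z ↔ x ∈ dom s ∧ act s x = z := by
  rw [Part.eq_some_iff]
  exact ⟨fun ⟨hx, hz⟩ => ⟨hx, hz⟩, fun ⟨hx, hz⟩ => ⟨hx, hz⟩⟩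

theorem IsPartialAction.partialValue_mul {t u : S} (hα : IsPartialAction G dom act)
    (htu : G.comp t u) {x : X} (hx : x ∈ dom u) :
    partialValue dom act (some (G.mul t u), x) = partialValue dom act (some t, act u x) := by
  obtain ⟨hP1, hP2⟩ := hα
  have hiff : act u x ∈ dom t ↔ x ∈ dom (G.mul t u) := by
    have hP1x := Set.ext_iff.mp (hP1 t u htu) x
    exact ⟨fun h => (hP1x.mp ⟨hx, h, x, hx, rfl⟩).2, fun h => (hP1x.mpr ⟨hx, h⟩).2.1⟩
  exact Part.ext' hiff.symm fun hx' _ => (hP2 t u htu x ⟨hx, hx'⟩).symm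

theorem IsPartialAction.partialValue_eq_of_preRel (hα : IsPartialAction G dom act)
    {a b : Option S × X} (hab : preRel G dom act a b) :
    partialValue dom act a = partialValue dom act b := by
  rcases hab with ⟨s, x, hx, rfl, rfl⟩ | ⟨t, u, x, htu, hx, rfl, rfl⟩
  · exact (partialValue_some_eq_some_iff.mpr ⟨hx, rfl⟩).symm
  · exact hα.partialValue_mul htu hx

theorem IsPartialAction.partialValue_eq_of_approx (hα : IsPartialAction G dom act)
    {a b : Option S × X} (hab : approx G dom act a b) :
    partialValue dom act a = partialValue dom act b :=
  congrArg (Quot.lift (partialValue dom act) fun _ _ => hα.partialValue_eq_of_preRel)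
    (Quot.eqvGen_sound hab)

theorem IsPartialAction.mem_dom_of_approx_none (hα : IsPartialAction G dom act) {t : S}
    {x y : X} (h : approx G dom act (none, x) (some t, y)) : y ∈ dom t ∧ act t y = x :=
  partialValue_some_eq_some_iff.mp (hα.partialValue_eq_of_approx h).symm

end Semigroupoid

open Semigroupoid in
theorem statement13_general {S : Type u} {X : Type v} (G : Semigroupoid S)
    (dom : S → Set X) (act : S → X → X) (hα : IsPartialAction G dom act)
    (t p : S) (x y : X)
    (h : approx G dom act (none, x) (some t, y))
    (hpt : G.comp p t) :
    approx G dom act (some p, x) (some (G.mul p t), y) := by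
  obtain ⟨hy, rfl⟩ := hα.mem_dom_of_approx_none h
  exact .symm _ _ (.rel _ _ (.inr ⟨p, t, y, hpt, hy, rfl, rfl⟩))

open Semigroupoid in
/-- If `(δ,x) ≈ (t,y)` and `(p,t) ∈ S⁽²⁾`, then `(p,x) ≈ (pt,y)`. -/
theorem statement13 {S : Type u} {X : Type v} (G : Semigroupoid S)
    (dom : S → Set X) (act : S → X → X) (hα : IsPartialAction G dom act)
    (t p : S) (x y : X)
    (hDt : ((some t : Option S), y) ∈ DSet G dom act)
    (h : approx G dom act (none, x) (some t, y))
    (hpt : G.comp p t) :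
    approx G dom act (some p, x) (some (G.mul p t), y) :=
  statement13_general G dom act hα t p x y h hpt
end

section
/- Let S be a semigroupoid, (α,X) a partial action of S, and (β,E) the global action on E = D/≈ from the universal globalization construction. Define δ : X → E by δ(x) = [δ,x]. Then the triple (δ,β,E) is a universal globalization of (α,X): δ is an embedding of partial actions, and for every morphism of partial actions φ : (α,X) → (θ,Y) with (θ,Y) a global action, there exists a unique morphism of partial actions Φ : (β,E) → (θ,Y) with Φ∘δ = φ. -/
universe u v w

/-! The partial evaluation `[δ,x] ↦ x`, `[s,x] ↦ α_s x` (undefined off `ₛX`) is constant on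
`≈`-classes by (P1) and (P2); it separates the points `[δ,x]`, which makes `δ` an embedding.
A morphism `φ` into a global action `θ` extends to `E` by `[δ,x] ↦ φ x`, `[s,x] ↦ θ_s (φ x)`:
(P2) and (G2) for `θ` make this respect the generators of `≈`. The extension is unique
because `[s,x] = β_s [δ,x]`. -/

namespace Semigroupoid

variable {S : Type*} {X : Type*} {G : Semigroupoid S} {dom : S → Set X} {act : S → X → X}

theorem mem_rhoDom_of_mem {s : S} {x : X} (hx : x ∈ dom s) : x ∈ rhoDom G dom act s :=
  Or.inl ⟨s, Relation.EqvGen.refl s, hx⟩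

theorem some_mem_DSet {s : S} {x : X} (hx : x ∈ rhoDom G dom act s) :
    ((some s, x) : Option S × X) ∈ DSet G dom act := by
  rintro _ ⟨⟩
  exact hx

theorem approx_none_some {s : S} {x : X} (hx : x ∈ dom s) :
    approx G dom act (none, act s x) (some s, x) :=
  Relation.EqvGen.rel _ _ (Or.inl ⟨s, x, hx, rfl, rfl⟩)

theorem mkE_eq_of_approx {p q : DSet G dom act} (h : approx G dom act p.val q.val) :
    mkE G dom act p = mkE G dom act q :=
  Quotient.sound h

theorem approx_of_mkE_eq {p q : DSet G dom act} (h : mkE G dom act p = mkE G dom act q) :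
    approx G dom act p.val q.val :=
  Quotient.exact h

theorem mem_DSet_of_preRel {p q : Option S × X} (h : preRel G dom act p q) :
    p ∈ DSet G dom act ∧ q ∈ DSet G dom act := by
  rcases h with ⟨s, x, hx, rfl, rfl⟩ | ⟨t, u, x, htu, hx, rfl, rfl⟩
  · exact ⟨noneMem G dom act _, some_mem_DSet (mem_rhoDom_of_mem hx)⟩
  · have hR : Rrel G u (G.mul t u) :=
      Relation.EqvGen.symm _ _ (Relation.EqvGen.rel _ _ (Or.inr (Or.inr ⟨t, htu, rfl⟩)))
    exact ⟨some_mem_DSet (Or.inl ⟨u, hR, hx⟩), some_mem_DSet (Or.inr ⟨u, htu, x, hx, rfl⟩)⟩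

theorem mem_DSet_iff_of_approx {p q : Option S × X} (h : approx G dom act p q) :
    p ∈ DSet G dom act ↔ q ∈ DSet G dom act := by
  induction h with
  | rel _ _ h => exact iff_of_true (mem_DSet_of_preRel h).1 (mem_DSet_of_preRel h).2
  | refl => exact Iff.rfl
  | symm _ _ _ ih => exact ih.symm
  | trans _ _ _ _ _ ih₁ ih₂ => exact ih₁.trans ih₂

theorem mem_domE_iff {s : S} {e : EType G dom act} :
    e ∈ domE G dom act s ↔
      (∃ (t : S) (y : X) (hD : ((some t : Option S), y) ∈ DSet G dom act),
        G.comp s t ∧ e = mkE G dom act ⟨(some t, y), hD⟩) ∨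
      ∃ x ∈ rhoDom G dom act s, e = deltaMap G dom act x := by
  constructor
  · rintro (⟨p, t, y, hst, hpy, rfl⟩ | h)
    · exact Or.inl ⟨t, y, (mem_DSet_iff_of_approx hpy).mp p.2, hst, mkE_eq_of_approx hpy⟩
    · exact Or.inr h
  · rintro (⟨t, y, hD, hst, rfl⟩ | h)
    · exact Or.inl ⟨⟨_, hD⟩, t, y, hst, Relation.EqvGen.refl _, rfl⟩
    · exact Or.inr h

section Evaluation

open Classical in
noncomputable def eval (dom : S → Set X) (act : S → X → X) : Option S × X → Option X
  | (none, x) => some x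
  | (some s, x) => if x ∈ dom s then some (act s x) else none

theorem eval_eq_of_preRel (hα : IsPartialAction G dom act) {p q : Option S × X}
    (h : preRel G dom act p q) : eval dom act p = eval dom act q := by
  rcases h with ⟨s, x, hx, rfl, rfl⟩ | ⟨t, u, x, htu, hx, rfl, rfl⟩
  · simp [eval, hx]
  · have hP1 := Set.ext_iff.mp (hα.1 t u htu) x
    by_cases hm : x ∈ dom (G.mul t u)
    · have ht : act u x ∈ dom t := (hP1.mpr ⟨hx, hm⟩).2.1
      simp only [eval, hm, ht, if_true]
      exact congrArg some (hα.2 t u htu x ⟨hx, hm⟩).symm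
    · have ht : act u x ∉ dom t := fun ht => hm (hP1.mp ⟨hx, ht, x, hx, rfl⟩).2
      simp [eval, hm, ht]

theorem eval_eq_of_approx (hα : IsPartialAction G dom act) {p q : Option S × X}
    (h : approx G dom act p q) : eval dom act p = eval dom act q := by
  induction h with
  | rel _ _ h => exact eval_eq_of_preRel hα h
  | refl => rfl
  | symm _ _ _ ih => exact ih.symm
  | trans _ _ _ _ _ ih₁ ih₂ => exact ih₁.trans ih₂

theorem deltaMap_injective (hα : IsPartialAction G dom act) :
    Function.Injective (deltaMap G dom act) := fun x y h => by
  simpa [eval] using eval_eq_of_approx hα (approx_of_mkE_eq h)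

theorem mem_dom_and_eq_act_of_deltaMap_eq (hα : IsPartialAction G dom act) {t : S} {x y : X}
    {hD : ((some t : Option S), y) ∈ DSet G dom act}
    (h : deltaMap G dom act x = mkE G dom act ⟨(some t, y), hD⟩) :
    y ∈ dom t ∧ x = act t y := by
  have hev := eval_eq_of_approx hα (approx_of_mkE_eq h)
  by_cases hy : y ∈ dom t
  · simp_all [eval]
  · simp [eval, hy] at hev

end Evaluation

section Beta

variable (βE : S → EType G dom act → EType G dom act)

/-- `β_s [t,y] = [st,y]` for `t ∈ S^s`. -/
def MapsSomeClass : Prop :=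
  ∀ (s t : S) (y : X), G.comp s t →
    ∀ hD : ((some t : Option S), y) ∈ DSet G dom act,
      ∃ hD' : ((some (G.mul s t) : Option S), y) ∈ DSet G dom act,
        βE s (mkE G dom act ⟨(some t, y), hD⟩) = mkE G dom act ⟨(some (G.mul s t), y), hD'⟩

/-- `β_s [δ,x] = [s,x]` for `x ∈ ₍ρₛ₎X`. -/
def MapsDeltaClass : Prop :=
  ∀ (s : S) (x : X), x ∈ rhoDom G dom act s →
    ∃ hD' : ((some s : Option S), x) ∈ DSet G dom act,
      βE s (deltaMap G dom act x) = mkE G dom act ⟨(some s, x), hD'⟩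

variable {βE}

theorem beta_deltaMap (hβ : MapsDeltaClass βE) {s : S} {x : X}
    (hD : ((some s : Option S), x) ∈ DSet G dom act) :
    βE s (deltaMap G dom act x) = mkE G dom act ⟨(some s, x), hD⟩ :=
  (hβ s x (hD s rfl)).2

theorem mem_rhoDom_of_deltaMap_mem_domE (hα : IsPartialAction G dom act) {s : S} {x : X}
    (h : deltaMap G dom act x ∈ domE G dom act s) : x ∈ rhoDom G dom act s := by
  rcases mem_domE_iff.mp h with ⟨t, y, hD, hst, hxy⟩ | ⟨x', hx', hxx'⟩
  · obtain ⟨hy, rfl⟩ := mem_dom_and_eq_act_of_deltaMap_eq hα hxy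
    exact Or.inr ⟨t, hst, y, hy, rfl⟩
  · rwa [deltaMap_injective hα hxx']

theorem isEmbedding_deltaMap (hα : IsPartialAction G dom act) (hβ : MapsDeltaClass βE) :
    IsEmbedding G dom act (domE G dom act) βE (deltaMap G dom act) := by
  have hmem : ∀ s x, x ∈ dom s → deltaMap G dom act x ∈ domE G dom act s :=
    fun s x hx => Or.inr ⟨x, mem_rhoDom_of_mem hx, rfl⟩
  have hact : ∀ s x, x ∈ dom s → deltaMap G dom act (act s x) = βE s (deltaMap G dom act x) :=
    fun s x hx => by
      rw [beta_deltaMap hβ (some_mem_DSet (mem_rhoDom_of_mem hx))]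
      exact mkE_eq_of_approx (approx_none_some hx)
  refine ⟨deltaMap_injective hα, fun s => ⟨hmem s, hact s⟩, fun s => Set.ext fun x => ⟨?_, ?_⟩⟩
  · exact fun hx => ⟨hmem s x hx, act s x, hact s x hx⟩
  · rintro ⟨hxE, z, hz⟩
    have hD := some_mem_DSet (mem_rhoDom_of_deltaMap_mem_domE hα hxE)
    rw [beta_deltaMap hβ hD] at hz
    exact (mem_dom_and_eq_act_of_deltaMap_eq hα hz).1

theorem eq_of_isMorphism_of_comp_deltaMap_eq {Z : Type*} {domZ : S → Set Z}
    {actZ : S → Z → Z} (hβ : MapsDeltaClass βE) {Φ₁ Φ₂ : EType G dom act → Z}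
    (h₁ : IsMorphism G (domE G dom act) βE domZ actZ Φ₁)
    (h₂ : IsMorphism G (domE G dom act) βE domZ actZ Φ₂)
    (h : Φ₁ ∘ deltaMap G dom act = Φ₂ ∘ deltaMap G dom act) : Φ₁ = Φ₂ := by
  funext e
  induction e using Quotient.ind with
  | _ p =>
    obtain ⟨⟨_ | s, x⟩, hD⟩ := p
    · exact congrFun h x
    · have hδ : deltaMap G dom act x ∈ domE G dom act s := Or.inr ⟨x, hD s rfl, rfl⟩
      change Φ₁ (mkE G dom act _) = Φ₂ (mkE G dom act _)
      rw [← beta_deltaMap hβ hD, (h₁ s).2 _ hδ, (h₂ s).2 _ hδ]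
      exact congrArg (actZ s) (congrFun h x)

end Beta

section GlobalAction

variable {Z : Type*} {domZ : S → Set Z} {actZ : S → Z → Z}

theorem dom_eq_of_Rrel (h₁ : G1 G domZ) (h₂ : G2 G domZ) {s t : S} (h : Rrel G s t) :
    domZ s = domZ t := by
  induction h with
  | rel a b hab =>
    rcases hab with rfl | ⟨he, hne⟩ | ⟨u, hu, rfl⟩
    · rfl
    · exact h₁ a b he hne
    · exact (h₂ u b hu).symm
  | refl => rfl
  | symm _ _ _ ih => exact ih.symm
  | trans _ _ _ _ _ ih₁ ih₂ => exact ih₁.trans ih₂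

theorem act_mem_dom_of_comp (hP1 : P1 G domZ actZ) (h₂ : G2 G domZ) {s t : S}
    (hst : G.comp s t) {z : Z} (hz : z ∈ domZ t) : actZ t z ∈ domZ s :=
  ((Set.ext_iff.mp (hP1 s t hst) z).mpr ⟨hz, h₂ s t hst ▸ hz⟩).2.1

theorem act_act_of_comp (hP2 : P2 G domZ actZ) (h₂ : G2 G domZ) {s t : S}
    (hst : G.comp s t) {z : Z} (hz : z ∈ domZ t) :
    actZ s (actZ t z) = actZ (G.mul s t) z :=
  hP2 s t hst z ⟨hz, h₂ s t hst ▸ hz⟩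

theorem IsMorphism.mem_dom_of_mem_rhoDom (hZ : IsGlobalAction G domZ actZ) {φ : X → Z}
    (hφ : IsMorphism G dom act domZ actZ φ) {s : S} {x : X}
    (hx : x ∈ rhoDom G dom act s) : φ x ∈ domZ s := by
  rcases hx with ⟨t, hts, hxt⟩ | ⟨t, hst, w, hw, rfl⟩
  · exact dom_eq_of_Rrel hZ.2.1 hZ.2.2 hts ▸ (hφ t).1 x hxt
  · rw [(hφ t).2 w hw]
    exact act_mem_dom_of_comp hZ.1.1 hZ.2.2 hst ((hφ t).1 w hw)

variable (actZ) in
def liftPair (φ : X → Z) : Option S × X → Z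
  | (none, x) => φ x
  | (some s, x) => actZ s (φ x)

theorem liftPair_eq_of_approx (hP2 : P2 G domZ actZ) (h₂ : G2 G domZ) {φ : X → Z}
    (hφ : IsMorphism G dom act domZ actZ φ) {p q : Option S × X}
    (h : approx G dom act p q) : liftPair actZ φ p = liftPair actZ φ q := by
  induction h with
  | rel _ _ h =>
    rcases h with ⟨s, x, hx, rfl, rfl⟩ | ⟨t, u, x, htu, hx, rfl, rfl⟩
    · exact (hφ s).2 x hx
    · change actZ (G.mul t u) (φ x) = actZ t (φ (act u x))
      rw [(hφ u).2 x hx, act_act_of_comp hP2 h₂ htu ((hφ u).1 x hx)]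
  | refl => rfl
  | symm _ _ _ ih => exact ih.symm
  | trans _ _ _ _ _ ih₁ ih₂ => exact ih₁.trans ih₂

def liftE (hZ : IsGlobalAction G domZ actZ) {φ : X → Z}
    (hφ : IsMorphism G dom act domZ actZ φ) : EType G dom act → Z :=
  Quotient.lift (fun p => liftPair actZ φ p.val)
    fun _ _ h => liftPair_eq_of_approx hZ.1.2 hZ.2.2 hφ h

theorem isMorphism_liftE {βE : S → EType G dom act → EType G dom act}
    (hβ₁ : MapsSomeClass βE) (hβ₂ : MapsDeltaClass βE) (hZ : IsGlobalAction G domZ actZ)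
    {φ : X → Z} (hφ : IsMorphism G dom act domZ actZ φ) :
    IsMorphism G (domE G dom act) βE domZ actZ (liftE hZ hφ) := by
  intro s
  refine ⟨fun e he => ?_, fun e he => ?_⟩ <;>
    rcases mem_domE_iff.mp he with ⟨t, y, hD, hst, rfl⟩ | ⟨x, hx, rfl⟩
  · exact act_mem_dom_of_comp hZ.1.1 hZ.2.2 hst (hφ.mem_dom_of_mem_rhoDom hZ (hD t rfl))
  · exact hφ.mem_dom_of_mem_rhoDom hZ hx
  · obtain ⟨hD', hβ⟩ := hβ₁ s t y hst hD
    rw [hβ]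
    exact (act_act_of_comp hZ.1.2 hZ.2.2 hst (hφ.mem_dom_of_mem_rhoDom hZ (hD t rfl))).symm
  · rw [beta_deltaMap hβ₂ (some_mem_DSet hx)]
    rfl

end GlobalAction

end Semigroupoid

open Semigroupoid in
theorem statement16_general {S : Type u} {X : Type v} (G : Semigroupoid S)
    (dom : S → Set X) (act : S → X → X) (hα : IsPartialAction G dom act)
    (βE : S → EType G dom act → EType G dom act)
    (hspec1 : ∀ (s t : S) (y : X), G.comp s t →
      ∀ hD : ((some t : Option S), y) ∈ DSet G dom act,
        ∃ hD' : ((some (G.mul s t) : Option S), y) ∈ DSet G dom act,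
          βE s (mkE G dom act ⟨(some t, y), hD⟩) =
            mkE G dom act ⟨(some (G.mul s t), y), hD'⟩)
    (hspec2 : ∀ (s : S) (x : X), x ∈ rhoDom G dom act s →
      ∃ hD' : ((some s : Option S), x) ∈ DSet G dom act,
        βE s (deltaMap G dom act x) = mkE G dom act ⟨(some s, x), hD'⟩) :
    IsEmbedding G dom act (domE G dom act) βE (deltaMap G dom act) ∧
    ∀ (Z : Type w) (domZ : S → Set Z) (actZ : S → Z → Z),
      IsGlobalAction G domZ actZ →
        ∀ φ : X → Z, IsMorphism G dom act domZ actZ φ →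
          ∃! Φ : EType G dom act → Z,
            IsMorphism G (domE G dom act) βE domZ actZ Φ ∧
              Φ ∘ deltaMap G dom act = φ := by
  refine ⟨isEmbedding_deltaMap hα hspec2, fun Z domZ actZ hZ φ hφ => ?_⟩
  have hΦ := isMorphism_liftE hspec1 hspec2 hZ hφ
  refine ⟨liftE hZ hφ, ⟨hΦ, rfl⟩, fun Φ ⟨hΦ', hΦδ⟩ => ?_⟩
  exact eq_of_isMorphism_of_comp_deltaMap_eq hspec2 hΦ' hΦ hΦδ

open Semigroupoid in
/-- The triple `(δ,β,E)` is a universal globalization of `(α,X)`: `δ(x) = [δ,x]` is an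
embedding of partial actions, and every morphism from `(α,X)` into a global action factors
uniquely through `δ`. -/
theorem statement16 {S : Type u} {X : Type v} (G : Semigroupoid S)
    (dom : S → Set X) (act : S → X → X) (hα : IsPartialAction G dom act)
    (βE : S → EType G dom act → EType G dom act)
    (hspec1 : ∀ (s t : S) (y : X), G.comp s t →
      ∀ hD : ((some t : Option S), y) ∈ DSet G dom act,
        ∃ hD' : ((some (G.mul s t) : Option S), y) ∈ DSet G dom act,
          βE s (mkE G dom act ⟨(some t, y), hD⟩) =
            mkE G dom act ⟨(some (G.mul s t), y), hD'⟩)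
    (hspec2 : ∀ (s : S) (x : X), x ∈ rhoDom G dom act s →
      ∃ hD' : ((some s : Option S), x) ∈ DSet G dom act,
        βE s (deltaMap G dom act x) = mkE G dom act ⟨(some s, x), hD'⟩)
    (hglob : IsGlobalAction G (domE G dom act) βE) :
    IsEmbedding G dom act (domE G dom act) βE (deltaMap G dom act) ∧
    ∀ (Z : Type w) (domZ : S → Set Z) (actZ : S → Z → Z),
      IsGlobalAction G domZ actZ →
        ∀ φ : X → Z, IsMorphism G dom act domZ actZ φ →
          ∃! Φ : EType G dom act → Z,
            IsMorphism G (domE G dom act) βE domZ actZ Φ ∧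
              Φ ∘ deltaMap G dom act = φ :=
  statement16_general G dom act hα βE hspec1 hspec2
end

section
/- Let S be a semigroupoid, (α,X) a partial action of S, and e ∈ S an identity element of S. Then: (i) α_e is a projection, i.e. X_e ⊆ ₑX and α_e(x) = x for every x ∈ X_e; (ii) if (e,s) ∈ S⁽²⁾, then X_s ⊆ X_e. -/
universe u v w

open Semigroupoid in
/-- `e` is an identity element of the semigroupoid. -/
def Semigroupoid.IsIdentity {S : Type u} (G : Semigroupoid S) (e : S) : Prop :=
  G.comp e e ∧ (∀ s : S, G.comp s e → G.mul s e = s) ∧ (∀ t : S, G.comp e t → G.mul e t = t)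

namespace Semigroupoid

variable {S : Type u} {X : Type v} {G : Semigroupoid S} {e : S} {dom : S → Set X} {act : S → X → X}

theorem P1.act_mem_dom (hP1 : P1 G dom act) {s t : S} (hst : G.comp s t) {x : X}
    (hxt : x ∈ dom t) (hxst : x ∈ dom (G.mul s t)) : act t x ∈ dom s :=
  ((hP1 s t hst).ge ⟨hxt, hxst⟩).2.1

theorem IsIdentity.img_subset_dom (he : G.IsIdentity e) (hP1 : P1 G dom act) {s : S}
    (hes : G.comp e s) : img dom act s ⊆ dom e := by
  rintro _ ⟨x, hx, rfl⟩
  exact hP1.act_mem_dom hes hx (by rwa [he.2.2 s hes])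

theorem IsIdentity.act_eq_self_of_mem_img (he : G.IsIdentity e) (hP2 : P2 G dom act) {s : S}
    (hes : G.comp e s) : ∀ y ∈ img dom act s, act e y = y := by
  rintro _ ⟨x, hx, rfl⟩
  have hes_eq : G.mul e s = s := he.2.2 s hes
  rw [hP2 e s hes x ⟨hx, by rwa [hes_eq]⟩, hes_eq]

end Semigroupoid

open Semigroupoid in
/-- For an identity `e`: (i) `α_e` is a projection, i.e. `X_e ⊆ ₑX` and `α_e(x) = x` for
`x ∈ X_e`; (ii) if `(e,s) ∈ S⁽²⁾` then `X_s ⊆ X_e`. -/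
theorem statement18 {S : Type u} {X : Type v} (G : Semigroupoid S)
    (dom : S → Set X) (act : S → X → X) (hα : IsPartialAction G dom act)
    (e : S) (he : IsIdentity G e) :
    (img dom act e ⊆ dom e ∧ ∀ x ∈ img dom act e, act e x = x) ∧
    (∀ s : S, G.comp e s → img dom act s ⊆ img dom act e) :=
  ⟨⟨he.img_subset_dom hα.1 he.1, he.act_eq_self_of_mem_img hα.2 he.1⟩,
    fun _ hes y hy =>
      ⟨y, he.img_subset_dom hα.1 hes hy, he.act_eq_self_of_mem_img hα.2 hes y hy⟩⟩
end
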